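/- Let u be the true odometer stabilizing a finite interval V ⊆ ℤ with given instructions and an initial configuration with no sleeping particles, and let u' be an odometer on ℤ that is weakly stable on V for the same instructions and initial configuration. Then u(v) ≤ u'(v) for all v ∈ V. -/

import Mathlib

/-- ARW instructions. -/
inductive Instr : Type
  | left
  | right
  | sleep
deriving DecidableEq

/-- The state of a single site: a sleeping particle, or `n` active particles. -/
inductive SiteState : Type
  | sleeping
  | active (n : ℕ)
deriving DecidableEq

/-- Adding one (active) particle to a site. -/
def addP : SiteState → SiteState
  | SiteState.sleeping => SiteState.active 2
  | SiteState.active n => SiteState.active (n + 1)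

/-- Removing one particle from a site (only meaningful for active sites). -/
def removeP : SiteState → SiteState
  | SiteState.sleeping => SiteState.sleeping
  | SiteState.active n => SiteState.active (n - 1)

/-- The effect of executing instruction `ins` at site `v` on the configuration. -/
def applyInstr (c : ℤ → SiteState) (v : ℤ) : Instr → (ℤ → SiteState)
  | Instr.left => fun w =>
      if w = v then removeP (c v) else if w = v - 1 then addP (c w) else c w
  | Instr.right => fun w =>
      if w = v then removeP (c v) else if w = v + 1 then addP (c w) else c w
  | Instr.sleep => fun w =>
      if w = v then (if c v = SiteState.active 1 then SiteState.sleeping else c v)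
      else c w

/-- Running a toppling sequence (a list of sites) from a configuration and an
odometer: each toppling at `v` executes the next unexecuted instruction at `v`
and increments the odometer there. -/
def run (instr : ℤ → ℕ → Instr) :
    List ℤ → (ℤ → SiteState) × (ℤ → ℕ) → (ℤ → SiteState) × (ℤ → ℕ)
  | [], p => p
  | v :: l, p =>
      run instr l
        (applyInstr p.1 v (instr v (p.2 v + 1)), Function.update p.2 v (p.2 v + 1))

/-- A toppling sequence is legal if each toppled site has at least one active
particle at the time it is toppled. -/
def Legal (instr : ℤ → ℕ → Instr) :
    List ℤ → (ℤ → SiteState) × (ℤ → ℕ) → Prop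
  | [], _ => True
  | v :: l, p => (∃ m : ℕ, p.1 v = SiteState.active (m + 1)) ∧
      Legal instr l
        (applyInstr p.1 v (instr v (p.2 v + 1)), Function.update p.2 v (p.2 v + 1))

/-- A configuration is stable on `V` if every site of `V` holds either a single
sleeping particle or no particle. -/
def StableOn (c : ℤ → SiteState) (V : Finset ℤ) : Prop :=
  ∀ v ∈ V, c v = SiteState.sleeping ∨ c v = SiteState.active 0

/-- The number of `left` instructions among the first `u v` instructions at `v`. -/
def Lcount (instr : ℤ → ℕ → Instr) (u : ℤ → ℕ) (v : ℤ) : ℕ :=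
  ((Finset.Icc 1 (u v)).filter fun i => instr v i = Instr.left).card

/-- The number of `right` instructions among the first `u v` instructions at `v`. -/
def Rcount (instr : ℤ → ℕ → Instr) (u : ℤ → ℕ) (v : ℤ) : ℕ :=
  ((Finset.Icc 1 (u v)).filter fun i => instr v i = Instr.right).card

/-- The number of particles left at `v` by the odometer `u`, starting from the
all-active configuration `σ`. -/
def height (instr : ℤ → ℕ → Instr) (σ : ℤ → ℕ) (u : ℤ → ℕ) (v : ℤ) : ℤ :=
  (σ v : ℤ) + (Rcount instr u (v - 1) : ℤ) + (Lcount instr u (v + 1) : ℤ)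
    - (Lcount instr u v : ℤ) - (Rcount instr u v : ℤ)

/-- Weak stability of the odometer `u` at `v`. -/
def WeaklyStableAt (instr : ℤ → ℕ → Instr) (σ : ℤ → ℕ) (u : ℤ → ℕ) (v : ℤ) : Prop :=
  (height instr σ u v = 0 ∨ height instr σ u v = 1) ∧
    (height instr σ u v = 1 → instr v (u v) = Instr.sleep)

/- Along a legal toppling sequence with odometer `m`, the configuration is the one `height` predicts
from `m`, and a site whose last executed instruction was `sleep` is asleep or holds at least two
particles (`Realizes`). If `m ≤ u'` and a site `v` with `m v = u' v` could still be toppled, then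
`1 ≤ height m v ≤ height u' v ≤ 1`, so by weak stability the last instruction at `v` was `sleep`
while `v` holds a single active particle, which is impossible. Hence `m ≤ u'` persists. -/

namespace SiteState

def particles : SiteState → ℤ
  | sleeping => 1
  | active n => n

def SleepingOrCrowded : SiteState → Prop
  | sleeping => True
  | active n => 2 ≤ n

@[simp]
lemma particles_addP (s : SiteState) : (addP s).particles = s.particles + 1 := by
  cases s <;> simp [addP, particles]

lemma SleepingOrCrowded.addP {s : SiteState} (hs : s.SleepingOrCrowded) :
    (_root_.addP s).SleepingOrCrowded := by
  cases s <;> simp_all [SleepingOrCrowded, _root_.addP]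
  omega

end SiteState

open SiteState

def Instr.transfer : Instr → ℤ → ℤ → ℤ
  | left, v, w => (if w = v - 1 then 1 else 0) - (if w = v then 1 else 0)
  | right, v, w => (if w = v + 1 then 1 else 0) - (if w = v then 1 else 0)
  | sleep, _, _ => 0

lemma particles_applyInstr {c : ℤ → SiteState} {v : ℤ} {k : ℕ} (hv : c v = active (k + 1))
    (i : Instr) (w : ℤ) : (applyInstr c v i w).particles = (c w).particles + i.transfer v w := by
  by_cases hw : w = v
  · subst hw
    cases i
    · simp [applyInstr, Instr.transfer, removeP, particles, hv]
      omega
    · simp [applyInstr, Instr.transfer, removeP, particles, hv]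
    · simp only [applyInstr, Instr.transfer, hv, if_true, active.injEq]
      split_ifs <;> simp_all [particles]
  · cases i <;> simp only [applyInstr, Instr.transfer, hw, if_false, add_zero]
    all_goals split_ifs <;> simp

lemma applyInstr_of_ne (c : ℤ → SiteState) {v w : ℤ} (i : Instr) (hw : w ≠ v) :
    applyInstr c v i w = c w ∨ applyInstr c v i w = addP (c w) := by
  cases i <;> simp only [applyInstr, hw, if_false, true_or]
  all_goals split_ifs <;> simp

lemma card_filter_Icc_one_add_one (p : ℕ → Prop) [DecidablePred p] (n : ℕ) :
    ((Finset.Icc 1 (n + 1)).filter p).card =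
      ((Finset.Icc 1 n).filter p).card + if p (n + 1) then 1 else 0 := by
  rw [← Finset.insert_Icc_right_eq_Icc_add_one (by omega), Finset.filter_insert]
  split_ifs <;> simp [Finset.card_insert_of_notMem]

section Counts

variable (instr : ℤ → ℕ → Instr)

lemma Lcount_update (m : ℤ → ℕ) (v w : ℤ) :
    Lcount instr (Function.update m v (m v + 1)) w =
      Lcount instr m w + if w = v ∧ instr v (m v + 1) = Instr.left then 1 else 0 := by
  by_cases hw : w = v
  · subst hw
    simp [Lcount, card_filter_Icc_one_add_one]
  · simp [Lcount, hw]

lemma Rcount_update (m : ℤ → ℕ) (v w : ℤ) :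
    Rcount instr (Function.update m v (m v + 1)) w =
      Rcount instr m w + if w = v ∧ instr v (m v + 1) = Instr.right then 1 else 0 := by
  by_cases hw : w = v
  · subst hw
    simp [Rcount, card_filter_Icc_one_add_one]
  · simp [Rcount, hw]

lemma Lcount_mono {m m' : ℤ → ℕ} (h : m ≤ m') (v : ℤ) : Lcount instr m v ≤ Lcount instr m' v :=
  Finset.card_le_card (Finset.filter_subset_filter _ (Finset.Icc_subset_Icc_right (h v)))

lemma Rcount_mono {m m' : ℤ → ℕ} (h : m ≤ m') (v : ℤ) : Rcount instr m v ≤ Rcount instr m' v :=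
  Finset.card_le_card (Finset.filter_subset_filter _ (Finset.Icc_subset_Icc_right (h v)))

variable (σ : ℤ → ℕ)

lemma height_update (m : ℤ → ℕ) (v w : ℤ) :
    height instr σ (Function.update m v (m v + 1)) w =
      height instr σ m w + (instr v (m v + 1)).transfer v w := by
  simp only [height, Lcount_update, Rcount_update]
  cases instr v (m v + 1) <;> simp [Instr.transfer] <;> split_ifs <;> omega

lemma height_le_height_of_le {m m' : ℤ → ℕ} (h : m ≤ m') {v : ℤ} (hv : m v = m' v) :
    height instr σ m v ≤ height instr σ m' v := by
  have hL : Lcount instr m v = Lcount instr m' v := by simp only [Lcount, hv]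
  have hR : Rcount instr m v = Rcount instr m' v := by simp only [Rcount, hv]
  have := Rcount_mono instr h (v - 1)
  have := Lcount_mono instr h (v + 1)
  simp only [height]
  omega

end Counts

structure Realizes (instr : ℤ → ℕ → Instr) (σ : ℤ → ℕ) (c : ℤ → SiteState) (m : ℤ → ℕ) :
    Prop where
  height_eq : ∀ w, height instr σ m w = (c w).particles
  sleepingOrCrowded : ∀ w, instr w (m w) = Instr.sleep → (c w).SleepingOrCrowded

namespace Realizes

variable {instr : ℤ → ℕ → Instr} {σ : ℤ → ℕ}

lemma initial (h0 : ∀ v, instr v 0 ≠ Instr.sleep) :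
    Realizes instr σ (fun v => active (σ v)) 0 where
  height_eq w := by simp [height, Lcount, Rcount, particles]
  sleepingOrCrowded w h := absurd h (h0 w)

lemma topple {c : ℤ → SiteState} {m : ℤ → ℕ} (hcm : Realizes instr σ c m) {v : ℤ} {k : ℕ}
    (hv : c v = active (k + 1)) :
    Realizes instr σ (applyInstr c v (instr v (m v + 1))) (Function.update m v (m v + 1)) where
  height_eq w := by
    rw [height_update, particles_applyInstr hv, hcm.height_eq]
  sleepingOrCrowded w h := by
    by_cases hw : w = v
    · subst hw
      rw [Function.update_self] at h
      rw [h]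
      simp only [applyInstr, if_true, hv, active.injEq]
      split_ifs with h1
      · trivial
      · simp only [SleepingOrCrowded]
        omega
    · rw [Function.update_of_ne hw] at h
      rcases applyInstr_of_ne c (instr v (m v + 1)) hw with h' | h' <;> rw [h']
      · exact hcm.sleepingOrCrowded w h
      · exact (hcm.sleepingOrCrowded w h).addP

lemma lt_of_weaklyStableAt {c : ℤ → SiteState} {m u' : ℤ → ℕ} (hcm : Realizes instr σ c m)
    (hle : m ≤ u') {v : ℤ} (hws : WeaklyStableAt instr σ u' v) {k : ℕ}
    (hv : c v = active (k + 1)) : m v < u' v := by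
  by_contra hlt
  have heq : m v = u' v := le_antisymm (hle v) (not_lt.mp hlt)
  have hmono := height_le_height_of_le instr σ hle heq
  have hm : height instr σ m v = k + 1 := by simp [hcm.height_eq, hv, particles]
  have hu' : height instr σ u' v = 1 := by rcases hws.1 with h | h <;> omega
  have hk : k = 0 := by omega
  have hcrowded := hcm.sleepingOrCrowded v (heq ▸ hws.2 hu')
  simp [hv, hk, SleepingOrCrowded] at hcrowded

lemma run_le {u' : ℤ → ℕ} :
    ∀ (l : List ℤ) (p : (ℤ → SiteState) × (ℤ → ℕ)), (∀ v ∈ l, WeaklyStableAt instr σ u' v) →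
      Legal instr l p → Realizes instr σ p.1 p.2 → p.2 ≤ u' → (run instr l p).2 ≤ u'
  | [], _, _, _, _, hle => hle
  | v :: l, (c, m), hws, ⟨⟨k, hv⟩, hlegal⟩, hcm, hle => by
    have hlt := hcm.lt_of_weaklyStableAt hle (hws v List.mem_cons_self) hv
    exact run_le l _ (fun w hw => hws w (List.mem_cons_of_mem v hw)) hlegal (hcm.topple hv)
      (update_le_iff.2 ⟨hlt, fun w _ => hle w⟩)

end Realizes

theorem least_action_principle_general (instr : ℤ → ℕ → Instr)
    (hinstr0 : ∀ v, instr v 0 = Instr.left)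
    (σ : ℤ → ℕ) (V : Finset ℤ) (l : List ℤ) (hl : ∀ v ∈ l, v ∈ V)
    (hlegal : Legal instr l (fun v => SiteState.active (σ v), fun _ => 0))
    (u' : ℤ → ℕ) (hws : ∀ v ∈ V, WeaklyStableAt instr σ u' v) :
    ∀ v ∈ V, (run instr l (fun v => SiteState.active (σ v), fun _ => 0)).2 v ≤ u' v :=
  fun v _ => Realizes.run_le l _ (fun w hw => hws w (hl w hw)) hlegal
    (Realizes.initial fun w => by simp [hinstr0]) (fun _ => Nat.zero_le _) v

/-- Least-action principle: if `u` is the true odometer stabilizing the finite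
set `V` (the odometer of a legal toppling sequence within `V` whose final
configuration is stable on `V`, started from a configuration `σ` with no
sleeping particles), and `u'` is weakly stable on `V` for the same instructions
and initial configuration, then `u ≤ u'` on `V`. -/
theorem least_action_principle (instr : ℤ → ℕ → Instr)
    (hinstr0 : ∀ v, instr v 0 = Instr.left)
    (σ : ℤ → ℕ) (V : Finset ℤ) (l : List ℤ) (hl : ∀ v ∈ l, v ∈ V)
    (hlegal : Legal instr l (fun v => SiteState.active (σ v), fun _ => 0))
    (hstab : StableOn (run instr l (fun v => SiteState.active (σ v), fun _ => 0)).1 V)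
    (u' : ℤ → ℕ) (hws : ∀ v ∈ V, WeaklyStableAt instr σ u' v) :
    ∀ v ∈ V, (run instr l (fun v => SiteState.active (σ v), fun _ => 0)).2 v ≤ u' v :=
  least_action_principle_general instr hinstr0 σ V l hl hlegal u' hws
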